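/- arXiv:2006.07978 — 3 statements merged into one kernel-verified Lean document; each statement's English description precedes it below -/
import Mathlib

section
/- There exists a constant C > 0 such that for all 0 < s < t ≤ 1 and x, y ∈ [0,1], the heat kernel G on the circle [0,1] satisfies ∫₀ᵗ ∫₀¹ [G(s, x−z) − G(s, y−z)]² dz ds ≤ C|x−y|. -/
open MeasureTheory Real Set

/-- Heat kernel on the circle `[0,1]` with endpoints identified. -/
noncomputable def G (t x : ℝ) : ℝ :=
  ∑' n : ℤ, (Real.sqrt (2 * Real.pi * t))⁻¹ * Real.exp (-(x + (n : ℝ)) ^ 2 / (2 * t))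

/-!
Poisson summation turns `G` into its Fourier series `G t x = ∑ₖ e^{-2π²k²t} e^{-2πikx}`.
By Parseval, `∫₀¹ (G r (x - z) - G r (y - z))² dz = ∑ₖ e^{-4π²k²r} (2 - 2 cos 2πk(x - y))`,
and integrating over `r ∈ (0, t) ⊆ (0, ∞)` bounds the double integral by
`∑ₖ (2 - 2 cos 2πkh) / (4π²k²)` with `h = x - y`. The Fourier series of the Bernoulli
polynomial `B₂` evaluates this sum to `|h| (1 - |h|) ≤ |h|` for `|h| ≤ 1`, so `C = 1` works.
-/

open AddCircle

section Fourier

variable {T : ℝ}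

lemma norm_fourier_apply (n : ℤ) (x : AddCircle T) : ‖fourier n x‖ = 1 :=
  Circle.norm_coe _

lemma fourier_add_apply (n : ℤ) (x y : AddCircle T) :
    fourier n (x + y) = fourier n x * fourier n y := by
  simp only [fourier_apply, smul_add, toCircle_add, Circle.coe_mul]

lemma norm_sq_fourier_sub_fourier (n : ℤ) (a b : ℝ) :
    ‖fourier (T := T) n a - fourier (T := T) n b‖ ^ 2 = 2 - 2 * cos (2 * π * n * (a - b) / T) := by
  have h : ∀ c : ℝ, 2 * π * Complex.I * n * c / T = (2 * π * n * c / T : ℝ) * Complex.I :=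
    fun c => by push_cast; ring
  simp only [fourier_coe_apply, h, Complex.sq_norm, Complex.normSq_apply, Complex.sub_re,
    Complex.sub_im, Complex.exp_ofReal_mul_I_re, Complex.exp_ofReal_mul_I_im]
  rw [show 2 * π * n * (a - b) / T = 2 * π * n * a / T - 2 * π * n * b / T by ring, cos_sub]
  nlinarith [sin_sq_add_cos_sq (2 * π * n * a / T), sin_sq_add_cos_sq (2 * π * n * b / T)]

variable [Fact (0 < T)] {d : ℤ → ℂ}

lemma summable_smul_fourier (hd : Summable fun n => ‖d n‖) :
    Summable fun n => d n • fourier (T := T) n :=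
  .of_norm (by simpa [norm_smul, fourier_norm] using hd)

lemma fourierCoeff_tsum_smul_fourier (hd : Summable fun n => ‖d n‖) :
    fourierCoeff ⇑(∑' n, d n • fourier (T := T) n) = d := by
  ext k
  set F : ℤ → AddCircle T → ℂ := fun n t => fourier (-k) t • (d n • fourier n t)
  have hF_int : ∀ n, Integrable (F n) haarAddCircle := fun n =>
    (by fun_prop : Continuous (F n)).integrable_of_hasCompactSupport
      (HasCompactSupport.of_compactSpace _)
  have hF_norm : ∀ n, ∫ t, ‖F n t‖ ∂haarAddCircle = ‖d n‖ := fun n => by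
    simp only [F, norm_smul, norm_fourier_apply, one_mul, mul_one, integral_const, probReal_univ,
      one_smul]
  calc fourierCoeff ⇑(∑' n, d n • fourier (T := T) n) k
      = ∫ t, ∑' n, F n t ∂haarAddCircle := by
        simp only [fourierCoeff, F, tsum_const_smul'']
        congr! 3 with t
        exact (ContinuousMap.tsum_apply (summable_smul_fourier hd) t).symm
    _ = ∑' n, d n * fourierCoeff (fourier (T := T) n) k := by
        rw [← integral_tsum_of_summable_integral_norm hF_int (by simpa [hF_norm] using hd)]
        simp only [fourierCoeff, F, ← integral_const_mul, smul_eq_mul, mul_left_comm]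
    _ = d k := by simp [fourierCoeff_fourier, Pi.single_apply]

lemma integral_norm_sq_tsum_smul_fourier (hd : Summable fun n => ‖d n‖) :
    ∫ t, ‖(∑' n, d n • fourier (T := T) n) t‖ ^ 2 ∂haarAddCircle = ∑' n, ‖d n‖ ^ 2 := by
  have parseval := tsum_sq_fourierCoeff
    (ContinuousMap.toLp (E := ℂ) 2 haarAddCircle ℂ (∑' n, d n • fourier (T := T) n))
  simp only [fourierCoeff_toLp] at parseval
  rw [fourierCoeff_tsum_smul_fourier hd] at parseval
  rw [parseval]
  refine integral_congr_ae ?_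
  filter_upwards [ContinuousMap.coeFn_toLp (E := ℂ) (p := 2) (𝕜 := ℂ) haarAddCircle
    (∑' n, d n • fourier (T := T) n)] with t ht
  rw [ht]

end Fourier

lemma setIntegral_Ioc_norm_sq_tsum_fourier {d : ℤ → ℂ} (hd : Summable fun n => ‖d n‖) :
    ∫ z in Ioc (0:ℝ) 1, ‖∑' n, d n * fourier (T := 1) n z‖ ^ 2 = ∑' n, ‖d n‖ ^ 2 := by
  have hpreimage :=
    UnitAddCircle.integral_preimage 0 fun t => ‖(∑' n, d n • fourier (T := 1) n) t‖ ^ 2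
  rw [zero_add] at hpreimage
  rw [← integral_norm_sq_tsum_smul_fourier (T := 1) hd, integral_haarAddCircle, inv_one, one_smul,
    ← hpreimage]
  refine setIntegral_congr_fun measurableSet_Ioc fun z _ => ?_
  rw [← ContinuousMap.tsum_apply (summable_smul_fourier hd)]
  rfl

lemma summable_exp_neg_mul_sq {c : ℝ} (hc : 0 < c) :
    Summable fun n : ℤ => rexp (-(c * n ^ 2)) := by
  have := ((summable_jacobiTheta₂_term_iff 0 (c / π * Complex.I)).2
    (by simpa using div_pos hc pi_pos)).norm
  refine this.congr fun n => ?_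
  rw [norm_jacobiTheta₂_term]
  congr 1
  simp only [Complex.zero_im, mul_zero, sub_zero, Complex.mul_I_im]
  norm_cast
  field_simp

lemma G_eq_tsum_fourier {t : ℝ} (ht : 0 < t) (x : ℝ) :
    (G t x : ℂ) =
      ∑' n : ℤ, (rexp (-(2 * π ^ 2 * t * n ^ 2)) : ℂ) * fourier (T := 1) n (-x : ℝ) := by
  have h2πt : 0 < 2 * π * t := by positivity
  have hconst : (((√(2 * π * t))⁻¹ : ℝ) : ℂ) = 1 / ((2 * π * t : ℝ) : ℂ) ^ (1 / 2 : ℂ) := by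
    rw [sqrt_eq_rpow, Complex.ofReal_inv, Complex.ofReal_cpow h2πt.le]
    norm_num
  calc (G t x : ℂ)
      = 1 / ((2 * π * t : ℝ) : ℂ) ^ (1 / 2 : ℂ) * ∑' n : ℤ,
          Complex.exp (-π / (2 * π * t : ℝ) * (n + Complex.I * (-Complex.I * x)) ^ 2) := by
        rw [G, Complex.ofReal_tsum, ← tsum_mul_left]
        refine tsum_congr fun n => ?_
        have hI : Complex.I * (-Complex.I * x) = x := by
          rw [← mul_assoc, mul_neg, Complex.I_mul_I, neg_neg, one_mul]
        rw [Complex.ofReal_mul, hconst, Complex.ofReal_exp, hI]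
        congr 2
        have : (π : ℂ) ≠ 0 := Complex.ofReal_ne_zero.2 pi_ne_zero
        have : (t : ℂ) ≠ 0 := Complex.ofReal_ne_zero.2 ht.ne'
        push_cast
        field_simp
        ring
    _ = ∑' n : ℤ, Complex.exp (-π * (2 * π * t : ℝ) * n ^ 2 + 2 * π * (-Complex.I * x) * n) :=
        (Complex.tsum_exp_neg_quadratic (by simpa using h2πt) _).symm
    _ = _ := tsum_congr fun n => by
        rw [fourier_coe_apply, Complex.ofReal_exp, ← Complex.exp_add]
        congr 1
        push_cast
        ring

lemma hasSum_one_sub_cos_div_sq {h : ℝ} (hh : h ∈ Icc (0:ℝ) 1) :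
    HasSum (fun n : ℕ => (1 - cos (2 * π * n * h)) / n ^ 2) (π ^ 2 * (h * (1 - h))) := by
  have hcos := hasSum_one_div_nat_pow_mul_cos one_ne_zero hh
  rw [← bernoulliFun, mul_one, bernoulliFun_two] at hcos
  have hvalue : π ^ 2 * (h * (1 - h))
      = π ^ 2 / 6
        - (-1) ^ (1 + 1) * (2 * π) ^ 2 / 2 / (Nat.factorial 2 : ℝ) * (h ^ 2 - h + 6⁻¹) := by
    norm_num [Nat.factorial]
    ring
  rw [hvalue]
  exact (hasSum_zeta_two.sub hcos).congr_fun fun n => by ring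

/-- The `k = 0` term is `0 / 0 = 0`. -/
lemma hasSum_two_sub_two_cos_div_sq {h : ℝ} (hh : |h| ≤ 1) :
    HasSum (fun k : ℤ => (2 - 2 * cos (2 * π * k * h)) / (4 * π ^ 2 * k ^ 2))
      (|h| * (1 - |h|)) := by
  set f : ℤ → ℝ := fun k => (2 - 2 * cos (2 * π * k * h)) / (4 * π ^ 2 * k ^ 2)
  have hcos_abs : ∀ k : ℝ, cos (2 * π * k * |h|) = cos (2 * π * k * h) := fun k => by
    rcases abs_choice h with e | e <;> rw [e]
    rw [mul_neg, cos_neg]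
  have hnat : HasSum (fun n : ℕ => f n) (|h| * (1 - |h|) / 2) := by
    have := (hasSum_one_sub_cos_div_sq ⟨abs_nonneg h, hh⟩).div_const (2 * π ^ 2)
    rw [show π ^ 2 * (|h| * (1 - |h|)) / (2 * π ^ 2) = |h| * (1 - |h|) / 2 by
      field_simp] at this
    refine this.congr_fun fun n => ?_
    simp only [f, Int.cast_natCast, hcos_abs]
    field_simp
    ring
  have hshift : HasSum (fun n : ℕ => f (n + 1)) (|h| * (1 - |h|) / 2) := by
    simpa [f] using (hasSum_nat_add_iff' 1).2 hnat
  have heven : ∀ k, f (-k) = f k := fun k => by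
    simp only [f, Int.cast_neg, neg_sq, mul_neg, neg_mul, cos_neg]
  convert hshift.of_add_one_of_neg_add_one (by simpa only [heven] using hshift) using 1
  simp [f]

lemma setIntegral_Ioc_exp_neg_mul_le {a : ℝ} (ha : 0 < a) (t : ℝ) :
    ∫ r in Ioc 0 t, rexp (-a * r) ≤ a⁻¹ :=
  calc ∫ r in Ioc 0 t, rexp (-a * r)
      ≤ ∫ r in Ioi 0, rexp (-a * r) :=
        setIntegral_mono_set (exp_neg_integrableOn_Ioi 0 ha)
          (ae_of_all _ fun r => (exp_pos _).le) Ioc_subset_Ioi_self.eventuallyLE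
    _ = a⁻¹ := by
        rw [integral_exp_mul_Ioi (neg_neg_of_pos ha), mul_zero, exp_zero, div_neg, neg_div,
          neg_neg, one_div]

lemma setIntegral_sq_G_sub_G {r : ℝ} (hr : 0 < r) (x y : ℝ) :
    ∫ z in Ioc (0:ℝ) 1, (G r (x - z) - G r (y - z)) ^ 2
      = ∑' k : ℤ, rexp (-(4 * π ^ 2 * k ^ 2) * r) * (2 - 2 * cos (2 * π * k * (x - y))) := by
  set c : ℤ → ℝ := fun k => rexp (-(2 * π ^ 2 * r * k ^ 2))
  set d : ℤ → ℂ := fun k => c k * (fourier (T := 1) k (-x : ℝ) - fourier (T := 1) k (-y : ℝ))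
  have hc : Summable c := summable_exp_neg_mul_sq (by positivity)
  have hc_norm : ∀ k, ‖(c k : ℂ)‖ = c k := fun k => by
    rw [Complex.norm_real, norm_eq_abs, abs_of_pos (exp_pos _)]
  have hGc : ∀ w z : ℝ,
      (G r (w - z) : ℂ) = ∑' k, (c k * fourier (T := 1) k (-w : ℝ)) * fourier (T := 1) k z :=
    fun w z => by
      simp only [G_eq_tsum_fourier hr, neg_sub, sub_eq_neg_add z w, coe_add, fourier_add_apply]
      exact tsum_congr fun k => (mul_assoc _ _ _).symm
  have hsummable : ∀ w z : ℝ,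
      Summable fun k => (c k * fourier (T := 1) k (-w : ℝ)) * fourier (T := 1) k z :=
    fun w z => .of_norm (by simpa only [norm_mul, hc_norm, norm_fourier_apply, mul_one] using hc)
  have hd : Summable fun k => ‖d k‖ := by
    refine .of_nonneg_of_le (fun _ => norm_nonneg _) (fun k => ?_) (hc.mul_left 2)
    rw [norm_mul, hc_norm, mul_comm]
    gcongr
    exact (norm_sub_le _ _).trans_eq
      (by rw [norm_fourier_apply, norm_fourier_apply, one_add_one_eq_two])
  have hrepr : ∀ z : ℝ,
      ((G r (x - z) - G r (y - z) : ℝ) : ℂ) = ∑' k, d k * fourier (T := 1) k z := fun z => by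
    rw [Complex.ofReal_sub, hGc, hGc, ← (hsummable x z).tsum_sub (hsummable y z)]
    exact tsum_congr fun k => by simp only [d]; ring
  calc ∫ z in Ioc (0:ℝ) 1, (G r (x - z) - G r (y - z)) ^ 2
      = ∫ z in Ioc (0:ℝ) 1, ‖∑' k, d k * fourier (T := 1) k z‖ ^ 2 := by
        simp only [← hrepr, Complex.norm_real, norm_eq_abs, sq_abs]
    _ = ∑' k, ‖d k‖ ^ 2 := setIntegral_Ioc_norm_sq_tsum_fourier hd
    _ = _ := tsum_congr fun k => by
        have hc_sq : c k ^ 2 = rexp (-(4 * π ^ 2 * k ^ 2) * r) := by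
          rw [sq, ← exp_add]
          ring_nf
        rw [norm_mul, mul_pow, norm_sq_fourier_sub_fourier, hc_norm, hc_sq, div_one,
          show -x - -y = -(x - y) by ring, mul_neg, cos_neg]

lemma integral_setIntegral_sq_G_sub_G_le (t : ℝ) {x y : ℝ} (hxy : |x - y| ≤ 1) :
    ∫ r in Ioc (0:ℝ) t, ∫ z in Ioc (0:ℝ) 1, (G r (x - z) - G r (y - z)) ^ 2
      ≤ |x - y| * (1 - |x - y|) := by
  set w : ℤ → ℝ := fun k => 2 - 2 * cos (2 * π * k * (x - y))
  set f : ℤ → ℝ → ℝ := fun k r => rexp (-(4 * π ^ 2 * k ^ 2) * r) * w k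
  have hw : ∀ k, 0 ≤ w k := fun k => by
    linarith [cos_le_one (2 * π * k * (x - y))]
  have hf_nonneg : ∀ k r, 0 ≤ f k r := fun k r => mul_nonneg (exp_pos _).le (hw k)
  have hf_int : ∀ k, IntegrableOn (f k) (Ioc 0 t) :=
    fun k => (by fun_prop : Continuous (f k)).integrableOn_Ioc
  have hf_le : ∀ k, ∫ r in Ioc 0 t, f k r ≤ w k / (4 * π ^ 2 * k ^ 2) := fun k => by
    rcases eq_or_ne k 0 with rfl | hk
    · simp [f, w]
    · rw [integral_mul_const, div_eq_inv_mul]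
      exact mul_le_mul_of_nonneg_right (setIntegral_Ioc_exp_neg_mul_le (by positivity) t) (hw k)
  have hsum := hasSum_two_sub_two_cos_div_sq hxy
  have hf_sum : Summable fun k => ∫ r in Ioc 0 t, f k r :=
    .of_nonneg_of_le (fun k => setIntegral_nonneg measurableSet_Ioc fun r _ => hf_nonneg k r)
      hf_le hsum.summable
  calc ∫ r in Ioc (0:ℝ) t, ∫ z in Ioc (0:ℝ) 1, (G r (x - z) - G r (y - z)) ^ 2
      = ∫ r in Ioc 0 t, ∑' k, f k r :=
        setIntegral_congr_fun measurableSet_Ioc fun r hr => setIntegral_sq_G_sub_G hr.1 x y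
    _ = ∑' k, ∫ r in Ioc 0 t, f k r := by
        refine (integral_tsum_of_summable_integral_norm hf_int ?_).symm
        simpa only [norm_of_nonneg (hf_nonneg _ _)] using hf_sum
    _ ≤ ∑' k, w k / (4 * π ^ 2 * k ^ 2) := hf_sum.tsum_le_tsum hf_le hsum.summable
    _ = |x - y| * (1 - |x - y|) := hsum.tsum_eq

/-- Spatial Hölder estimate for the heat kernel on the circle. -/
theorem heat_kernel_space_holder :
    ∃ C > 0, ∀ s t x y : ℝ, 0 < s → s < t → t ≤ 1 →
      x ∈ Icc (0:ℝ) 1 → y ∈ Icc (0:ℝ) 1 →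
      (∫ r in Ioc (0:ℝ) t, ∫ z in Ioc (0:ℝ) 1, (G r (x - z) - G r (y - z)) ^ 2)
        ≤ C * |x - y| := by
  refine ⟨1, one_pos, fun s t x y _ _ _ hx hy => ?_⟩
  have hxy : |x - y| ≤ 1 := abs_sub_le_iff.2 ⟨by linarith [hx.2, hy.1], by linarith [hx.1, hy.2]⟩
  calc _ ≤ |x - y| * (1 - |x - y|) := integral_setIntegral_sq_G_sub_G_le t hxy
    _ ≤ 1 * |x - y| := by nlinarith [abs_nonneg (x - y)]
end

section
/- There exists a constant C > 0 such that for all x, y ∈ ℝ and t > 0: Σ_{k≥1} k^{-2} · min(1, 2πk|x−y|)² ≤ C|x−y|. -/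
open Real

private lemma summable_inv_sq_succ : Summable (fun k : ℕ => 1 / ((k : ℝ) + 1) ^ 2) := by
  have : Summable (fun n : ℕ => 1 / (n : ℝ) ^ 2) :=
    (Real.summable_one_div_nat_pow).mpr (by norm_num)
  have := (summable_nat_add_iff 1).mpr this
  simpa using this

/-- Tail bound `Σ_{k} 1/(k+N+1)^2 ≤ 1/N` for `N ≥ 1`. -/
private lemma tail_bound (N : ℕ) (hN : 1 ≤ N) :
    (∑' k : ℕ, 1 / ((k : ℝ) + N + 1) ^ 2) ≤ 1 / (N : ℝ) := by
  have hsum : Summable (fun k : ℕ => 1 / ((k : ℝ) + N + 1) ^ 2) := by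
    have := (summable_nat_add_iff N).mpr summable_inv_sq_succ
    simpa [add_assoc, add_comm, add_left_comm] using this
  apply Summable.tsum_le_of_sum_range_le hsum
  intro n
  have key : ∀ k : ℕ, 1 / ((k : ℝ) + N + 1) ^ 2 ≤
      1 / ((k : ℝ) + N) - 1 / ((k : ℝ) + N + 1) := by
    intro k
    have hx : (1 : ℝ) ≤ (k : ℝ) + N := by
      have : (1 : ℝ) ≤ (N : ℝ) := by exact_mod_cast hN
      have hk : (0 : ℝ) ≤ (k : ℝ) := Nat.cast_nonneg k
      linarith
    have hx0 : (0 : ℝ) < (k : ℝ) + N := by linarith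
    have hx1 : (0 : ℝ) < (k : ℝ) + N + 1 := by linarith
    rw [div_sub_div _ _ (ne_of_gt hx0) (ne_of_gt hx1)]
    rw [div_le_div_iff₀ (by positivity) (by positivity)]
    ring_nf
    nlinarith [sq_nonneg ((k : ℝ) + N)]
  calc ∑ k ∈ Finset.range n, 1 / ((k : ℝ) + N + 1) ^ 2
      ≤ ∑ k ∈ Finset.range n, (1 / ((k : ℝ) + N) - 1 / ((k : ℝ) + N + 1)) :=
        Finset.sum_le_sum fun k _ => key k
    _ = (fun k : ℕ => 1 / ((k : ℝ) + N)) 0 - (fun k : ℕ => 1 / ((k : ℝ) + N)) n := by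
        rw [← Finset.sum_range_sub' (fun k : ℕ => 1 / ((k : ℝ) + N)) n]
        refine Finset.sum_congr rfl fun k _ => ?_
        push_cast
        ring
    _ ≤ 1 / (N : ℝ) := by
        have : (0 : ℝ) ≤ 1 / ((n : ℝ) + N) := by positivity
        simp only [Nat.cast_zero, zero_add]
        linarith

/-- Key series estimate: `Σ_{k ≥ 1} k⁻² min(1, 2πk|x-y|)² ≤ C|x-y|`. -/
theorem series_min_estimate :
    ∃ C > 0, ∀ x y t : ℝ, 0 < t →
      (∑' k : ℕ, (1 / ((k : ℝ) + 1) ^ 2) * (min 1 (2 * Real.pi * ((k : ℝ) + 1) * |x - y|)) ^ 2)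
        ≤ C * |x - y| := by
  refine ⟨6 * Real.pi, by positivity, ?_⟩
  intro x y t _
  set d : ℝ := |x - y| with hd
  have hd0 : 0 ≤ d := abs_nonneg _
  set f : ℕ → ℝ := fun k =>
    (1 / ((k : ℝ) + 1) ^ 2) * (min 1 (2 * Real.pi * ((k : ℝ) + 1) * d)) ^ 2 with hfdef
  have hf_nonneg : ∀ k, 0 ≤ f k := by
    intro k; apply mul_nonneg (by positivity) (sq_nonneg _)
  have hmin_nonneg : ∀ k : ℕ, 0 ≤ min 1 (2 * Real.pi * ((k : ℝ) + 1) * d) := by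
    intro k; exact le_min zero_le_one (by positivity)
  have hf_le_sq : ∀ k, f k ≤ 1 / ((k : ℝ) + 1) ^ 2 := by
    intro k
    have h1 : (min 1 (2 * Real.pi * ((k : ℝ) + 1) * d)) ^ 2 ≤ 1 :=
      pow_le_one₀ (hmin_nonneg k) (min_le_left _ _)
    calc f k ≤ (1 / ((k : ℝ) + 1) ^ 2) * 1 := by
          exact mul_le_mul_of_nonneg_left h1 (by positivity)
      _ = 1 / ((k : ℝ) + 1) ^ 2 := mul_one _
  have hf_le_a : ∀ k, f k ≤ (2 * Real.pi * d) ^ 2 := by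
    intro k
    have h1 : (min 1 (2 * Real.pi * ((k : ℝ) + 1) * d)) ^ 2
        ≤ (2 * Real.pi * ((k : ℝ) + 1) * d) ^ 2 := by
      apply pow_le_pow_left₀ (hmin_nonneg k) (min_le_right _ _)
    have hk1 : (0 : ℝ) < ((k : ℝ) + 1) ^ 2 := by positivity
    calc f k ≤ (1 / ((k : ℝ) + 1) ^ 2) * (2 * Real.pi * ((k : ℝ) + 1) * d) ^ 2 :=
          mul_le_mul_of_nonneg_left h1 (by positivity)
      _ = (2 * Real.pi * d) ^ 2 := by field_simp
  have hsummable : Summable f :=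
    Summable.of_nonneg_of_le hf_nonneg hf_le_sq summable_inv_sq_succ
  -- two cases on a = 2πd vs 1
  rcases le_or_gt 1 (2 * Real.pi * d) with ha | ha
  · -- a ≥ 1 : bound by 2 ≤ 3·(2πd) = 6πd
    have h2 : (∑' k, f k) ≤ 2 := by
      have ht : (∑' k : ℕ, 1 / ((k : ℝ) + 1 + 1) ^ 2) ≤ 1 := by
        have := tail_bound 1 le_rfl
        simpa using this
      calc (∑' k, f k) ≤ ∑' k : ℕ, 1 / ((k : ℝ) + 1) ^ 2 :=
            Summable.tsum_le_tsum hf_le_sq hsummable summable_inv_sq_succ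
        _ = 1 / (((0 : ℕ) : ℝ) + 1) ^ 2 + ∑' k : ℕ, 1 / (((k + 1 : ℕ) : ℝ) + 1) ^ 2 :=
            Summable.tsum_eq_zero_add summable_inv_sq_succ
        _ ≤ 1 + 1 := by
            have heq : (∑' k : ℕ, 1 / (((k + 1 : ℕ) : ℝ) + 1) ^ 2)
                = ∑' k : ℕ, 1 / ((k : ℝ) + 1 + 1) ^ 2 := by
              apply tsum_congr; intro k; push_cast; ring_nf
            exact add_le_add (by norm_num) (le_trans (le_of_eq heq) ht)
        _ = 2 := by norm_num
    have : 2 ≤ 6 * Real.pi * d := by nlinarith [Real.pi_pos]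
    linarith
  · -- a < 1
    rcases eq_or_lt_of_le hd0 with hdz | hdpos
    · have hz : d = 0 := hdz.symm
      have hz2 : ∀ k, f k = 0 := by intro k; simp [hfdef, hz]
      calc (∑' k, f k) = ∑' _k : ℕ, (0 : ℝ) := tsum_congr hz2
        _ = 0 := tsum_zero
        _ ≤ 6 * Real.pi * d := by rw [hz]; simp
    · set a : ℝ := 2 * Real.pi * d with hadef
      have ha0 : 0 < a := by positivity
      set N : ℕ := ⌈a⁻¹⌉₊ with hNdef
      have hN1 : 1 ≤ N := Nat.one_le_ceil_iff.mpr (by positivity)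
      have hNge : a⁻¹ ≤ (N : ℝ) := Nat.le_ceil _
      have hNle : (N : ℝ) ≤ a⁻¹ + 1 := le_of_lt (Nat.ceil_lt_add_one (by positivity))
      have hsplit := (Summable.sum_add_tsum_nat_add N hsummable).symm
      have hhead : ∑ k ∈ Finset.range N, f k ≤ (N : ℝ) * a ^ 2 := by
        calc ∑ k ∈ Finset.range N, f k ≤ ∑ _k ∈ Finset.range N, a ^ 2 :=
              Finset.sum_le_sum fun k _ => hf_le_a k
          _ = (N : ℝ) * a ^ 2 := by simp [mul_comm]
      have htail : (∑' k : ℕ, f (k + N)) ≤ 1 / (N : ℝ) := by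
        have hle : ∀ k : ℕ, f (k + N) ≤ 1 / ((k : ℝ) + N + 1) ^ 2 := by
          intro k
          have := hf_le_sq (k + N)
          simpa [add_assoc] using this
        have hs1 : Summable (fun k : ℕ => f (k + N)) :=
          (summable_nat_add_iff N).mpr hsummable
        have hs2 : Summable (fun k : ℕ => 1 / ((k : ℝ) + N + 1) ^ 2) := by
          have := (summable_nat_add_iff N).mpr summable_inv_sq_succ
          simpa [add_assoc, add_comm, add_left_comm] using this
        calc (∑' k : ℕ, f (k + N)) ≤ ∑' k : ℕ, 1 / ((k : ℝ) + N + 1) ^ 2 :=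
              Summable.tsum_le_tsum hle hs1 hs2
          _ ≤ 1 / N := tail_bound N hN1
      have hNa : (N : ℝ) * a ^ 2 ≤ a + a ^ 2 := by
        have : (N : ℝ) * a ^ 2 ≤ (a⁻¹ + 1) * a ^ 2 :=
          mul_le_mul_of_nonneg_right hNle (sq_nonneg a)
        have heq : (a⁻¹ + 1) * a ^ 2 = a + a ^ 2 := by field_simp
        linarith [heq ▸ this]
      have hinvN : 1 / (N : ℝ) ≤ a := by
        rw [div_le_iff₀ (by exact_mod_cast Nat.lt_of_lt_of_le Nat.zero_lt_one hN1)]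
        have := mul_le_mul_of_nonneg_left hNge (le_of_lt ha0)
        rw [mul_inv_cancel₀ (ne_of_gt ha0)] at this
        linarith [this]
      have haa : a ^ 2 ≤ a := by nlinarith
      have : (∑' k, f k) ≤ 3 * a := by
        rw [hsplit]
        linarith
      calc (∑' k, f k) ≤ 3 * a := this
        _ = 6 * Real.pi * d := by rw [hadef]; ring
end

section
/- There exists a constant C > 0 such that for all h ∈ (0,1]: h + Σ_{k≥1} (2πk)^{-2} [1 − exp(−(2πk)² h)] ≤ C h^{1/2}. -/
/-!
Since `1 - e^{-u} ≤ min 1 u`, the `k`-th term is at most `min h (k + 1)⁻²`. Splitting the sum at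
`N = ⌊h^{-1/2}⌋`, the first `N` terms contribute at most `N h ≤ √h`, and the tail at most
`∑_{n > N} n⁻² ≤ 2 / (N + 1) ≤ 2 √h`.
-/

open Real Finset

lemma inv_mul_one_sub_exp_neg_mul_nonneg {a h : ℝ} (ha : 0 ≤ a) (hh : 0 ≤ h) :
    0 ≤ a⁻¹ * (1 - exp (-a * h)) := by
  have : exp (-a * h) ≤ 1 := exp_le_one_iff.mpr (by nlinarith)
  exact mul_nonneg (inv_nonneg.mpr ha) (by linarith)

lemma inv_mul_one_sub_exp_neg_mul_le_min {a : ℝ} (ha : 0 < a) (h : ℝ) :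
    a⁻¹ * (1 - exp (-a * h)) ≤ min h a⁻¹ := by
  refine le_min ?_ ?_
  · calc a⁻¹ * (1 - exp (-a * h)) ≤ a⁻¹ * (a * h) := by
          gcongr
          linarith [add_one_le_exp (-a * h)]
      _ = h := by field_simp
  · calc a⁻¹ * (1 - exp (-a * h)) ≤ a⁻¹ * 1 := by
          gcongr
          linarith [exp_pos (-a * h)]
      _ = a⁻¹ := mul_one _

lemma summable_inv_nat_add_one_sq : Summable fun k : ℕ => (((k : ℝ) + 1) ^ 2)⁻¹ := by
  have hsq : Summable fun k : ℕ => ((k : ℝ) ^ 2)⁻¹ := summable_nat_pow_inv.mpr one_lt_two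
  simpa using (summable_nat_add_iff 1).mpr hsq

lemma tsum_inv_nat_add_one_sq_tail_le (N : ℕ) :
    ∑' k : ℕ, ((((k + N : ℕ) : ℝ) + 1) ^ 2)⁻¹ ≤ 2 / ((N : ℝ) + 1) := by
  refine Real.tsum_le_of_sum_range_le (fun _ => by positivity) fun n => ?_
  calc ∑ k ∈ range n, ((((k + N : ℕ) : ℝ) + 1) ^ 2)⁻¹
        = ∑ i ∈ Ioo N (N + 1 + n), ((i : ℝ) ^ 2)⁻¹ := by
          rw [← Finset.Ico_add_one_left_eq_Ioo, sum_Ico_eq_sum_range]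
          refine sum_congr (by simp) fun k _ => ?_
          push_cast; ring_nf
    _ ≤ 2 / ((N : ℝ) + 1) := sum_Ioo_inv_sq_le _ _

lemma summable_min_inv_nat_add_one_sq {h : ℝ} (hh : 0 ≤ h) :
    Summable fun k : ℕ => min h (((k : ℝ) + 1) ^ 2)⁻¹ :=
  summable_inv_nat_add_one_sq.of_nonneg_of_le (fun _ => by positivity) fun _ =>
    min_le_right _ _

lemma tsum_min_inv_nat_add_one_sq_le {h : ℝ} (hh : 0 < h) :
    ∑' k : ℕ, min h (((k : ℝ) + 1) ^ 2)⁻¹ ≤ 3 * √h := by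
  set N := ⌊(√h)⁻¹⌋₊
  have hs : 0 < √h := sqrt_pos.mpr hh
  have hhead : ∑ k ∈ range N, min h (((k : ℝ) + 1) ^ 2)⁻¹ ≤ √h :=
    calc ∑ k ∈ range N, min h (((k : ℝ) + 1) ^ 2)⁻¹ ≤ ∑ _k ∈ range N, h :=
          sum_le_sum fun k _ => min_le_left _ _
      _ = N * h := by simp
      _ ≤ (√h)⁻¹ * h := by gcongr; exact Nat.floor_le (by positivity)
      _ = √h := by rw [inv_mul_eq_div, div_eq_iff hs.ne', mul_self_sqrt hh.le]
  have htail : ∑' k : ℕ, min h ((((k + N : ℕ) : ℝ) + 1) ^ 2)⁻¹ ≤ 2 * √h :=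
    calc ∑' k : ℕ, min h ((((k + N : ℕ) : ℝ) + 1) ^ 2)⁻¹
          ≤ ∑' k : ℕ, ((((k + N : ℕ) : ℝ) + 1) ^ 2)⁻¹ :=
          Summable.tsum_le_tsum (fun _ => min_le_right _ _)
            ((summable_nat_add_iff (f := fun k : ℕ => min h (((k : ℝ) + 1) ^ 2)⁻¹) N).mpr
              (summable_min_inv_nat_add_one_sq hh.le))
            ((summable_nat_add_iff (f := fun k : ℕ => (((k : ℝ) + 1) ^ 2)⁻¹) N).mpr
              summable_inv_nat_add_one_sq)
      _ ≤ 2 / ((N : ℝ) + 1) := tsum_inv_nat_add_one_sq_tail_le N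
      _ ≤ 2 * √h := by
          rw [div_le_iff₀ (by positivity)]
          linarith [(inv_lt_iff_one_lt_mul₀' hs).mp (Nat.lt_floor_add_one (√h)⁻¹)]
  rw [← (summable_min_inv_nat_add_one_sq hh.le).sum_add_tsum_nat_add N]
  linarith

/-- Series estimate for the time-regularity bound:
`h + Σ_{k ≥ 1} (2πk)⁻² (1 - exp(-(2πk)² h)) ≤ C h^{1/2}` for `h ∈ (0,1]`. -/
theorem series_time_estimate :
    ∃ C > 0, ∀ h : ℝ, 0 < h → h ≤ 1 →
      h + (∑' k : ℕ, ((2 * Real.pi * ((k : ℝ) + 1)) ^ 2)⁻¹ *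
          (1 - Real.exp (-(2 * Real.pi * ((k : ℝ) + 1)) ^ 2 * h)))
        ≤ C * h ^ ((1:ℝ)/2) := by
  refine ⟨4, by norm_num, fun h hh h1 => ?_⟩
  have hfreq (k : ℕ) : ((k : ℝ) + 1) ^ 2 ≤ (2 * π * ((k : ℝ) + 1)) ^ 2 := by
    gcongr
    nlinarith [pi_gt_three]
  have hterm (k : ℕ) :
      ((2 * π * ((k : ℝ) + 1)) ^ 2)⁻¹ * (1 - exp (-(2 * π * ((k : ℝ) + 1)) ^ 2 * h))
        ≤ min h (((k : ℝ) + 1) ^ 2)⁻¹ :=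
    (inv_mul_one_sub_exp_neg_mul_le_min (by positivity) h).trans
      (min_le_min_left h (inv_anti₀ (by positivity) (hfreq k)))
  have hseries := (Summable.tsum_le_tsum hterm
    ((summable_min_inv_nat_add_one_sq hh.le).of_nonneg_of_le
      (fun k => inv_mul_one_sub_exp_neg_mul_nonneg (by positivity) hh.le) hterm)
    (summable_min_inv_nat_add_one_sq hh.le)).trans (tsum_min_inv_nat_add_one_sq_le hh)
  have hh_le_sqrt : h ≤ √h := (le_sqrt hh.le hh.le).mpr (by nlinarith)
  rw [← sqrt_eq_rpow]
  linarith
end
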